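/- arXiv:1406.0088 — 3 statements merged into one kernel-verified Lean document; each statement's English description precedes it below -/
import Mathlib

section
/- Let 𝒢 be an ample groupoid and 𝕜 a commutative unital ring. Then the groupoid algebra 𝕜𝒢 has local units: for any finite set f₁, …, f_n ∈ 𝕜𝒢 there exists an idempotent e (namely e = χ_U for a suitable compact open subset U of the unit space) with e*f_i = f_i = f_i*e for all i. -/
open Set

structure TopGroupoid (Γ : Type) [TopologicalSpace Γ] where
  d : Γ → Γ
  r : Γ → Γ
  mul : Γ → Γ → Γ
  inv : Γ → Γ
  r_d : ∀ g, r (d g) = d g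
  d_r : ∀ g, d (r g) = r g
  d_mul : ∀ g h, d g = r h → d (mul g h) = d h
  r_mul : ∀ g h, d g = r h → r (mul g h) = r g
  mul_assoc : ∀ g h k, d g = r h → d h = r k → mul (mul g h) k = mul g (mul h k)
  mul_d : ∀ g, mul g (d g) = g
  r_mul_self : ∀ g, mul (r g) g = g
  d_inv : ∀ g, d (inv g) = r g
  r_inv : ∀ g, r (inv g) = d g
  mul_inv : ∀ g, mul g (inv g) = r g
  inv_mul : ∀ g, mul (inv g) g = d g
  continuous_d : Continuous d
  continuous_r : Continuous r
  continuous_inv : Continuous inv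
  continuous_mul : ContinuousOn (fun p : Γ × Γ => mul p.1 p.2) {p | d p.1 = r p.2}

namespace TopGroupoid

variable {Γ : Type} [TopologicalSpace Γ] (G : TopGroupoid Γ)

/-- The unit space, identified with its image in the arrow space. -/
def units : Set Γ := Set.range G.d

/-- `f` restricted to `U` is a homeomorphism onto its (open) image. -/
def IsPartialHomeoOn (f : Γ → Γ) (U : Set Γ) : Prop :=
  Set.InjOn f U ∧ IsOpen (f '' U) ∧ ∀ V, V ⊆ U → IsOpen V → IsOpen (f '' V)

/-- A local bisection: an open set on which both `d` and `r` restrict to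
homeomorphisms onto their images. -/
def IsBisection (U : Set Γ) : Prop :=
  IsOpen U ∧ IsPartialHomeoOn G.d U ∧ IsPartialHomeoOn G.r U

/-- The groupoid is étale: the domain map is a local homeomorphism. -/
def Etale : Prop := ∀ g : Γ, ∃ U, g ∈ U ∧ IsOpen U ∧ IsPartialHomeoOn G.d U

/-- Setwise product of subsets of the arrow space. -/
def bisMul (U V : Set Γ) : Set Γ :=
  {k | ∃ u ∈ U, ∃ v ∈ V, G.d u = G.r v ∧ k = G.mul u v}

/-- Setwise inverse. -/
def bisInv (U : Set Γ) : Set Γ := G.inv '' U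

/-- Ample: étale, the unit space is Hausdorff and has a basis of compact open sets. -/
def Ample : Prop :=
  G.Etale ∧
    (∀ x y, x ∈ G.units → y ∈ G.units → x ≠ y →
      ∃ U V : Set Γ, IsOpen U ∧ IsOpen V ∧ x ∈ U ∧ y ∈ V ∧ U ∩ V ∩ G.units = ∅) ∧
    ∀ x ∈ G.units, ∀ W : Set Γ, IsOpen W → x ∈ W →
      ∃ K : Set Γ, K ⊆ G.units ∧ x ∈ K ∧ K ⊆ W ∧ IsOpen K ∧ IsCompact K

/-- Convolution product of `𝕜`-valued functions on the arrow space. -/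
noncomputable def conv {𝕜 : Type} [CommRing 𝕜] (f₁ f₂ : Γ → 𝕜) : Γ → 𝕜 :=
  fun g => ∑ᶠ h ∈ {h : Γ | G.d h = G.d g}, f₁ (G.mul g (G.inv h)) * f₂ h

/-- Characteristic function of a set. -/
noncomputable def chi (𝕜 : Type) [CommRing 𝕜] (U : Set Γ) : Γ → 𝕜 :=
  Set.indicator U 1

/-- The groupoid algebra `𝕜𝒢`, as the span of characteristic functions of
compact open local bisections. -/
def grpAlg (𝕜 : Type) [CommRing 𝕜] : Submodule 𝕜 (Γ → 𝕜) :=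
  Submodule.span 𝕜 {f | ∃ U : Set Γ, G.IsBisection U ∧ IsCompact U ∧ f = chi 𝕜 U}

end TopGroupoid

namespace TopGroupoid

variable {Γ : Type} [TopologicalSpace Γ] (G : TopGroupoid Γ)

lemma d_d (g : Γ) : G.d (G.d g) = G.d g := by
  conv_lhs => rw [← G.r_d g]
  rw [G.d_r, G.r_d]

lemma d_unit {u : Γ} (hu : u ∈ G.units) : G.d u = u := by
  obtain ⟨k, rfl⟩ := hu; exact G.d_d k

lemma r_unit {u : Γ} (hu : u ∈ G.units) : G.r u = u := by
  obtain ⟨k, rfl⟩ := hu; exact G.r_d k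

lemma d_mem_units (g : Γ) : G.d g ∈ G.units := ⟨g, rfl⟩

lemma r_mem_units (g : Γ) : G.r g ∈ G.units := ⟨G.inv g, G.d_inv g⟩

lemma inv_d (g : Γ) : G.inv (G.d g) = G.d g := by
  have h1 : G.mul (G.inv (G.d g)) (G.d g) = G.d (G.d g) := G.inv_mul (G.d g)
  have h2 : G.d (G.inv (G.d g)) = G.d g := by rw [G.d_inv, G.r_d]
  have h3 : G.mul (G.inv (G.d g)) (G.d g) = G.inv (G.d g) := by
    have := G.mul_d (G.inv (G.d g)); rwa [h2] at this
  rw [← h3, h1, G.d_d]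

lemma eq_of_mul_inv_unit {g h : Γ} (hd : G.d h = G.d g)
    (hu : G.mul g (G.inv h) ∈ G.units) : h = g := by
  have hdr : G.d g = G.r (G.inv h) := by rw [G.r_inv, hd]
  have hdu : G.d (G.mul g (G.inv h)) = G.r h := by rw [G.d_mul g _ hdr, G.d_inv]
  have heq : G.mul g (G.inv h) = G.r h := by rw [← G.d_unit hu, hdu]
  have h2 := congrArg (fun x => G.mul x h) heq
  rw [G.mul_assoc g (G.inv h) h hdr (by rw [G.d_inv]), G.inv_mul, hd, G.mul_d,
    G.r_mul_self] at h2
  exact h2.symm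

lemma conv_chi_left {𝕜 : Type} [CommRing 𝕜] {U : Set Γ} (hU : U ⊆ G.units)
    (f : Γ → 𝕜) (g : Γ) :
    G.conv (chi 𝕜 U) f g = chi 𝕜 U (G.r g) * f g := by
  have hsupp : ∀ h : Γ, h ≠ g →
      Set.indicator {h : Γ | G.d h = G.d g}
        (fun h => chi 𝕜 U (G.mul g (G.inv h)) * f h) h = 0 := by
    intro h hne
    by_cases hm : G.d h = G.d g
    · have hm' : h ∈ {h : Γ | G.d h = G.d g} := hm
      rw [Set.indicator_of_mem hm']
      have hz : chi 𝕜 U (G.mul g (G.inv h)) = 0 := by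
        unfold chi
        rw [Set.indicator_of_notMem]
        intro hmem
        exact hne (G.eq_of_mul_inv_unit hm (hU hmem))
      rw [hz, zero_mul]
    · exact Set.indicator_of_notMem (by exact hm : h ∉ {h : Γ | G.d h = G.d g}) _
  have hg : g ∈ {h : Γ | G.d h = G.d g} := rfl
  unfold conv
  rw [finsum_mem_def, finsum_eq_single _ g hsupp, Set.indicator_of_mem hg, G.mul_inv]

lemma conv_chi_right {𝕜 : Type} [CommRing 𝕜] {U : Set Γ} (hU : U ⊆ G.units)
    (f : Γ → 𝕜) (g : Γ) :
    G.conv f (chi 𝕜 U) g = f g * chi 𝕜 U (G.d g) := by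
  have hsupp : ∀ h : Γ, h ≠ G.d g →
      Set.indicator {h : Γ | G.d h = G.d g}
        (fun h => f (G.mul g (G.inv h)) * chi 𝕜 U h) h = 0 := by
    intro h hne
    by_cases hm : G.d h = G.d g
    · have hm' : h ∈ {h : Γ | G.d h = G.d g} := hm
      rw [Set.indicator_of_mem hm']
      have hz : chi 𝕜 U h = 0 := by
        unfold chi
        rw [Set.indicator_of_notMem]
        intro hmem
        exact hne (by rw [← G.d_unit (hU hmem), hm])
      rw [hz, mul_zero]
    · exact Set.indicator_of_notMem (by exact hm : h ∉ {h : Γ | G.d h = G.d g}) _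
  have hg : G.d g ∈ {h : Γ | G.d h = G.d g} := G.d_d g
  unfold conv
  rw [finsum_mem_def, finsum_eq_single _ (G.d g) hsupp, Set.indicator_of_mem hg,
    G.inv_d, G.mul_d]

/-- `U` controls the support of `f`. -/
def goodFor (𝕜 : Type) [CommRing 𝕜] (U : Set Γ) (f : Γ → 𝕜) : Prop :=
  ∀ g, f g ≠ 0 → G.r g ∈ U ∧ G.d g ∈ U

lemma conv_chi_left_eq {𝕜 : Type} [CommRing 𝕜] {U : Set Γ} (hU : U ⊆ G.units)
    {f : Γ → 𝕜} (hf : G.goodFor 𝕜 U f) : G.conv (chi 𝕜 U) f = f := by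
  funext g
  rw [G.conv_chi_left hU]
  by_cases h : f g = 0
  · rw [h, mul_zero]
  · have : chi 𝕜 U (G.r g) = 1 := by
      unfold chi; rw [Set.indicator_of_mem ((hf g h).1)]; rfl
    rw [this, one_mul]

lemma conv_chi_right_eq {𝕜 : Type} [CommRing 𝕜] {U : Set Γ} (hU : U ⊆ G.units)
    {f : Γ → 𝕜} (hf : G.goodFor 𝕜 U f) : G.conv f (chi 𝕜 U) = f := by
  funext g
  rw [G.conv_chi_right hU]
  by_cases h : f g = 0
  · rw [h, zero_mul]
  · have : chi 𝕜 U (G.d g) = 1 := by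
      unfold chi; rw [Set.indicator_of_mem ((hf g h).2)]; rfl
    rw [this, mul_one]

lemma exists_good {𝕜 : Type} [CommRing 𝕜] {f : Γ → 𝕜} (hf : f ∈ G.grpAlg 𝕜) :
    ∃ U : Set Γ, U ⊆ G.units ∧ IsOpen U ∧ IsCompact U ∧ G.goodFor 𝕜 U f := by
  refine Submodule.span_induction ?_ ?_ ?_ ?_ hf
  · rintro x ⟨V, hbis, hcomp, rfl⟩
    refine ⟨G.d '' V ∪ G.r '' V, ?_, ?_, ?_, ?_⟩
    · rintro u (⟨g, _, rfl⟩ | ⟨g, _, rfl⟩)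
      · exact G.d_mem_units g
      · exact G.r_mem_units g
    · exact (hbis.2.1.2.1).union (hbis.2.2.2.1)
    · exact (hcomp.image G.continuous_d).union (hcomp.image G.continuous_r)
    · intro g hg
      have hgV : g ∈ V := by
        by_contra hgV
        exact hg (Set.indicator_of_notMem hgV _)
      exact ⟨Or.inr ⟨g, hgV, rfl⟩, Or.inl ⟨g, hgV, rfl⟩⟩
  · exact ⟨∅, by simp, isOpen_empty, isCompact_empty, fun g hg => absurd rfl hg⟩
  · rintro x y _ _ ⟨U, hUu, hUo, hUc, hUg⟩ ⟨V, hVu, hVo, hVc, hVg⟩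
    refine ⟨U ∪ V, Set.union_subset hUu hVu, hUo.union hVo, hUc.union hVc, ?_⟩
    intro g hg
    by_cases hx : x g = 0
    · have hy : y g ≠ 0 := by
        intro hy; exact hg (by simp [Pi.add_apply, hx, hy])
      exact ⟨Or.inr (hVg g hy).1, Or.inr (hVg g hy).2⟩
    · exact ⟨Or.inl (hUg g hx).1, Or.inl (hUg g hx).2⟩
  · rintro c x _ ⟨U, hUu, hUo, hUc, hUg⟩
    refine ⟨U, hUu, hUo, hUc, ?_⟩
    intro g hg
    have hx : x g ≠ 0 := by
      intro hx; exact hg (by simp [Pi.smul_apply, hx])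
    exact hUg g hx

lemma unit_bisection {U : Set Γ} (hU : U ⊆ G.units) (hUo : IsOpen U) :
    G.IsBisection U := by
  have himd : ∀ V : Set Γ, V ⊆ U → G.d '' V = V := fun V hV => by
    rw [Set.image_congr (fun u hu => G.d_unit (hU (hV hu))), Set.image_id']
  have himr : ∀ V : Set Γ, V ⊆ U → G.r '' V = V := fun V hV => by
    rw [Set.image_congr (fun u hu => G.r_unit (hU (hV hu))), Set.image_id']
  refine ⟨hUo, ⟨?_, ?_, ?_⟩, ?_, ?_, ?_⟩
  · intro a ha b hb hab
    rw [← G.d_unit (hU ha), hab, G.d_unit (hU hb)]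
  · rw [himd U (le_refl U)]; exact hUo
  · intro V hV hVo; rw [himd V hV]; exact hVo
  · intro a ha b hb hab
    rw [← G.r_unit (hU ha), hab, G.r_unit (hU hb)]
  · rw [himr U (le_refl U)]; exact hUo
  · intro V hV hVo; rw [himr V hV]; exact hVo

end TopGroupoid

/-- The groupoid algebra of an ample groupoid has local units: any
finitely many elements admit a common two-sided identity which is an idempotent
of the form `χ_U` for a compact open subset `U` of the unit space. -/
theorem groupoid_algebra_has_local_units {Γ : Type} [TopologicalSpace Γ]
    (G : TopGroupoid Γ) (hG : G.Ample) (𝕜 : Type) [CommRing 𝕜]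
    (S : Finset (Γ → 𝕜)) (hS : ∀ f ∈ S, f ∈ G.grpAlg 𝕜) :
    ∃ U : Set Γ, U ⊆ G.units ∧ IsOpen U ∧ IsCompact U ∧
      TopGroupoid.chi 𝕜 U ∈ G.grpAlg 𝕜 ∧
      G.conv (TopGroupoid.chi 𝕜 U) (TopGroupoid.chi 𝕜 U) = TopGroupoid.chi 𝕜 U ∧
      ∀ f ∈ S, G.conv (TopGroupoid.chi 𝕜 U) f = f ∧
        G.conv f (TopGroupoid.chi 𝕜 U) = f := by
  classical
  -- first find a common good set for all elements of S
  have key : ∃ U : Set Γ, U ⊆ G.units ∧ IsOpen U ∧ IsCompact U ∧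
      ∀ f ∈ S, G.goodFor 𝕜 U f := by
    induction S using Finset.induction with
    | empty => exact ⟨∅, by simp, isOpen_empty, isCompact_empty, by simp⟩
    | @insert f T hfT ih =>
      obtain ⟨U, hUu, hUo, hUc, hUg⟩ := ih fun x hx => hS x (Finset.mem_insert_of_mem hx)
      obtain ⟨V, hVu, hVo, hVc, hVg⟩ := G.exists_good (hS f (Finset.mem_insert_self f T))
      refine ⟨U ∪ V, Set.union_subset hUu hVu, hUo.union hVo, hUc.union hVc, ?_⟩
      intro x hx g hg
      rcases Finset.mem_insert.mp hx with rfl | hxT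
      · exact ⟨Or.inr (hVg g hg).1, Or.inr (hVg g hg).2⟩
      · exact ⟨Or.inl (hUg x hxT g hg).1, Or.inl (hUg x hxT g hg).2⟩
  obtain ⟨U, hUu, hUo, hUc, hUg⟩ := key
  have hmem : TopGroupoid.chi 𝕜 U ∈ G.grpAlg 𝕜 :=
    Submodule.subset_span ⟨U, G.unit_bisection hUu hUo, hUc, rfl⟩
  have hgoodU : G.goodFor 𝕜 U (TopGroupoid.chi 𝕜 U) := by
    intro g hg
    have hgU : g ∈ U := by
      by_contra hgU
      exact hg (Set.indicator_of_notMem hgU _)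
    constructor
    · rw [G.r_unit (hUu hgU)]; exact hgU
    · rw [G.d_unit (hUu hgU)]; exact hgU
  refine ⟨U, hUu, hUo, hUc, hmem, G.conv_chi_left_eq hUu hgoodU, ?_⟩
  intro f hf
  exact ⟨G.conv_chi_left_eq hUu (hUg f hf), G.conv_chi_right_eq hUu (hUg f hf)⟩
end

section
/- Let 𝒢 be an ample groupoid, M a unitary right 𝕜𝒢-module, and 0 ≠ m ∈ M. Then there exists a point x of the unit space such that mχ_W ≠ 0 for every compact open neighborhood W of x; equivalently, the germ [m]_x in the stalk M_x is nonzero. Hence the map m ↦ ([m]_x)_{x ∈ 𝒢⁽⁰⁾} is injective. -/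
open Set

/-- Germ equality at `x`: two module elements have the same image in the stalk
`M_x = colim_{x ∈ W} Mχ_W` (the colimit over compact open neighbourhoods `W` of
`x` in the unit space, with restriction maps `m ↦ mχ_W`). -/
def germEq {Γ : Type} [TopologicalSpace Γ] (G : TopGroupoid Γ) (𝕜 : Type)
    [CommRing 𝕜] {M : Type} (act : M → (Γ → 𝕜) → M) (x : Γ) (a b : M) : Prop :=
  ∃ W : Set Γ, W ⊆ G.units ∧ IsOpen W ∧ IsCompact W ∧ x ∈ W ∧
    act a (TopGroupoid.chi 𝕜 W) = act b (TopGroupoid.chi 𝕜 W)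


/-!
Pick a compact open `U ⊆ 𝒢⁽⁰⁾` with `mχ_U = m`. If every point of `U` had a compact open
neighbourhood `W` with `mχ_W = 0`, compactness of `U` would give finitely many such `W` covering
`U`, and their union still kills `m`: `χ_{A ∪ B} = χ_A + χ_B - χ_{A ∩ B}` and
`mχ_{A ∩ B} = (mχ_A)χ_B`, where `A ∩ B` is compact because the unit space is Hausdorff.
For such a `W ⊇ U`, `m = mχ_U = (mχ_W)χ_U = 0`. This compactness argument replaces the
maximal ideal of the Boolean ring of compact open subsets of `U`. Injectivity of the germ map
is the same statement for `n - n'`.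
-/

namespace TopGroupoid

lemma act_zero_left {M α : Type} [AddGroup M] {act : M → α → M}
    (act_add : ∀ m n f, act (m + n) f = act m f + act n f) (f : α) : act 0 f = 0 :=
  map_zero (AddMonoidHom.mk' (act · f) (act_add · · f))

lemma act_sub_left {M α : Type} [AddGroup M] {act : M → α → M}
    (act_add : ∀ m n f, act (m + n) f = act m f + act n f) (a b : M) (f : α) :
    act (a - b) f = act a f - act b f :=
  map_sub (AddMonoidHom.mk' (act · f) (act_add · · f)) a b

lemma chi_union_add_chi_inter {Γ : Type} (𝕜 : Type) [CommRing 𝕜] (A B : Set Γ) :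
    chi 𝕜 (Γ := Γ) (A ∪ B) + chi 𝕜 (A ∩ B) = chi 𝕜 A + chi 𝕜 B := by
  funext g
  by_cases hA : g ∈ A <;> by_cases hB : g ∈ B <;> simp [chi, hA, hB]

variable {Γ : Type} [TopologicalSpace Γ] (G : TopGroupoid Γ)

lemma d_eq_self_of_mem_units {w : Γ} (hw : w ∈ G.units) : G.d w = w := by
  obtain ⟨k, rfl⟩ := hw
  simpa only [G.mul_d] using (G.d_mul k (G.d k) (G.r_d k).symm).symm

lemma r_eq_self_of_mem_units {w : Γ} (hw : w ∈ G.units) : G.r w = w := by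
  obtain ⟨k, rfl⟩ := hw
  exact G.r_d k

lemma inv_eq_self_of_mem_units {w : Γ} (hw : w ∈ G.units) : G.inv w = w := by
  calc G.inv w = G.mul (G.inv w) (G.d (G.inv w)) := (G.mul_d _).symm
    _ = G.mul (G.inv w) w := by rw [G.d_inv, G.r_eq_self_of_mem_units hw]
    _ = w := by rw [G.inv_mul, G.d_eq_self_of_mem_units hw]

lemma t2Space_units (hG : G.Ample) : T2Space G.units where
  t2 x y hxy := by
    obtain ⟨U, V, hUo, hVo, hxU, hyV, hUV⟩ := hG.2.1 x y x.2 y.2 (Subtype.coe_ne_coe.mpr hxy)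
    refine ⟨Subtype.val ⁻¹' U, Subtype.val ⁻¹' V, hUo.preimage continuous_subtype_val,
      hVo.preimage continuous_subtype_val, hxU, hyV, Set.disjoint_left.mpr ?_⟩
    intro z hzU hzV
    exact (Set.eq_empty_iff_forall_notMem.mp hUV) z ⟨⟨hzU, hzV⟩, z.2⟩

def IsCompactOpenUnits (W : Set Γ) : Prop := W ⊆ G.units ∧ IsOpen W ∧ IsCompact W

namespace IsCompactOpenUnits

variable {G} {A B : Set Γ}

lemma empty : G.IsCompactOpenUnits ∅ :=
  ⟨Set.empty_subset _, isOpen_empty, isCompact_empty⟩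

lemma union (hA : G.IsCompactOpenUnits A) (hB : G.IsCompactOpenUnits B) :
    G.IsCompactOpenUnits (A ∪ B) :=
  ⟨Set.union_subset hA.1 hB.1, hA.2.1.union hB.2.1, hA.2.2.union hB.2.2⟩

lemma inter (hG : G.Ample) (hA : G.IsCompactOpenUnits A) (hB : G.IsCompactOpenUnits B) :
    G.IsCompactOpenUnits (A ∩ B) := by
  have := G.t2Space_units hG
  have hK : ∀ K ⊆ G.units, IsCompact K → IsCompact ((↑) ⁻¹' K : Set G.units) :=
    fun K hKu hKc => by
      rwa [Subtype.isCompact_iff, Set.image_preimage_eq_inter_range, Subtype.range_coe,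
        Set.inter_eq_self_of_subset_left hKu]
  have hAB := ((hK A hA.1 hA.2.2).inter (hK B hB.1 hB.2.2)).image continuous_subtype_val
  rw [← Set.preimage_inter, Set.image_preimage_eq_inter_range, Subtype.range_coe,
    Set.inter_eq_self_of_subset_left (Set.inter_subset_left.trans hA.1)] at hAB
  exact ⟨Set.inter_subset_left.trans hA.1, hA.2.1.inter hB.2.1, hAB⟩

lemma isBisection (hA : G.IsCompactOpenUnits A) : G.IsBisection A := by
  have hPartialHomeo : ∀ f : Γ → Γ, (∀ w ∈ G.units, f w = w) → IsPartialHomeoOn f A := by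
    intro f hf
    have himage : ∀ V ⊆ A, f '' V = V := fun V hV => by
      rw [Set.image_congr fun v hv => hf v (hA.1 (hV hv)), Set.image_id']
    refine ⟨fun a ha b hb hab => ?_, by rw [himage A subset_rfl]; exact hA.2.1,
      fun V hV hVo => by rwa [himage V hV]⟩
    rwa [hf a (hA.1 ha), hf b (hA.1 hb)] at hab
  exact ⟨hA.2.1, hPartialHomeo _ fun _ => G.d_eq_self_of_mem_units,
    hPartialHomeo _ fun _ => G.r_eq_self_of_mem_units⟩

lemma chi_mem_grpAlg (𝕜 : Type) [CommRing 𝕜] (hA : G.IsCompactOpenUnits A) :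
    chi 𝕜 A ∈ G.grpAlg 𝕜 :=
  Submodule.subset_span ⟨A, hA.isBisection, hA.2.2, rfl⟩

end IsCompactOpenUnits

/-- On the unit space the only arrow `h` with `d h = d g` is `d g` itself, so the
convolution sum has at most one term. -/
lemma conv_chi_chi {𝕜 : Type} [CommRing 𝕜] {V W : Set Γ} (hV : V ⊆ G.units)
    (hW : W ⊆ G.units) : G.conv (chi 𝕜 V) (chi 𝕜 W) = chi 𝕜 (V ∩ W) := by
  funext g
  have hsingle : G.conv (chi 𝕜 V) (chi 𝕜 W) g = chi 𝕜 V g * chi 𝕜 W (G.d g) := by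
    rw [conv, finsum_mem_inter_support_eq' _ _ {G.d g}, finsum_mem_singleton,
      G.inv_eq_self_of_mem_units (G.d_mem_units g), G.mul_d]
    intro h hh
    have hhW : h ∈ W := by
      by_contra hhW
      simp [chi, hhW] at hh
    show G.d h = G.d g ↔ h = G.d g
    rw [G.d_eq_self_of_mem_units (hW hhW)]
  rw [hsingle]
  by_cases hgV : g ∈ V
  · rw [G.d_eq_self_of_mem_units (hV hgV)]
    by_cases hgW : g ∈ W <;> simp [chi, hgV, hgW]
  · simp [chi, hgV]

section RightModule

variable {𝕜 : Type} [CommRing 𝕜] {M : Type} {act : M → (Γ → 𝕜) → M}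

lemma act_zero_right [AddCommGroup M]
    (act_addf : ∀ m f₁ f₂, f₁ ∈ G.grpAlg 𝕜 → f₂ ∈ G.grpAlg 𝕜 →
      act m (f₁ + f₂) = act m f₁ + act m f₂) (p : M) :
    act p 0 = 0 := by
  have h := act_addf p 0 0 (zero_mem _) (zero_mem _)
  rwa [add_zero, left_eq_add] at h

lemma act_act_chi
    (act_conv : ∀ m f₁ f₂, f₁ ∈ G.grpAlg 𝕜 → f₂ ∈ G.grpAlg 𝕜 →
      act (act m f₁) f₂ = act m (G.conv f₁ f₂))
    (p : M) {A B : Set Γ} (hA : G.IsCompactOpenUnits A) (hB : G.IsCompactOpenUnits B) :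
    act (act p (chi 𝕜 A)) (chi 𝕜 B) = act p (chi 𝕜 (A ∩ B)) := by
  rw [act_conv p _ _ (hA.chi_mem_grpAlg 𝕜) (hB.chi_mem_grpAlg 𝕜), G.conv_chi_chi hA.1 hB.1]

lemma act_chi_union_eq_zero [AddCommGroup M] (hG : G.Ample)
    (act_addm : ∀ m n f, act (m + n) f = act m f + act n f)
    (act_addf : ∀ m f₁ f₂, f₁ ∈ G.grpAlg 𝕜 → f₂ ∈ G.grpAlg 𝕜 →
      act m (f₁ + f₂) = act m f₁ + act m f₂)
    (act_conv : ∀ m f₁ f₂, f₁ ∈ G.grpAlg 𝕜 → f₂ ∈ G.grpAlg 𝕜 →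
      act (act m f₁) f₂ = act m (G.conv f₁ f₂))
    {p : M} {A B : Set Γ} (hA : G.IsCompactOpenUnits A) (hB : G.IsCompactOpenUnits B)
    (hpA : act p (chi 𝕜 A) = 0) (hpB : act p (chi 𝕜 B) = 0) :
    act p (chi 𝕜 (A ∪ B)) = 0 := by
  have hpAB : act p (chi 𝕜 (A ∩ B)) = 0 := by
    rw [← G.act_act_chi act_conv p hA hB, hpA, act_zero_left act_addm]
  have h := congrArg (act p) (chi_union_add_chi_inter 𝕜 A B)
  rwa [act_addf _ _ _ ((hA.union hB).chi_mem_grpAlg 𝕜) ((hA.inter hG hB).chi_mem_grpAlg 𝕜),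
    act_addf _ _ _ (hA.chi_mem_grpAlg 𝕜) (hB.chi_mem_grpAlg 𝕜), hpA, hpB, hpAB, add_zero,
    add_zero] at h

lemma exists_forall_act_chi_ne_zero [AddCommGroup M] (hG : G.Ample)
    (act_addm : ∀ m n f, act (m + n) f = act m f + act n f)
    (act_addf : ∀ m f₁ f₂, f₁ ∈ G.grpAlg 𝕜 → f₂ ∈ G.grpAlg 𝕜 →
      act m (f₁ + f₂) = act m f₁ + act m f₂)
    (act_conv : ∀ m f₁ f₂, f₁ ∈ G.grpAlg 𝕜 → f₂ ∈ G.grpAlg 𝕜 →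
      act (act m f₁) f₂ = act m (G.conv f₁ f₂))
    {p : M} {U : Set Γ} (hU : G.IsCompactOpenUnits U) (hpU : act p (chi 𝕜 U) = p)
    (hp : p ≠ 0) :
    ∃ x ∈ G.units, ∀ W, G.IsCompactOpenUnits W → x ∈ W → act p (chi 𝕜 W) ≠ 0 := by
  by_contra! hkill
  obtain ⟨W, hW, hUW, hpW⟩ : ∃ W, G.IsCompactOpenUnits W ∧ U ⊆ W ∧ act p (chi 𝕜 W) = 0 := by
    refine hU.2.2.induction_on ⟨∅, .empty, subset_rfl, ?_⟩ ?_ ?_ ?_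
    · rw [chi, Set.indicator_empty]
      exact G.act_zero_right act_addf p
    · rintro s t hst ⟨W, hW, htW, hpW⟩
      exact ⟨W, hW, hst.trans htW, hpW⟩
    · rintro s t ⟨W, hW, hsW, hpW⟩ ⟨W', hW', htW', hpW'⟩
      exact ⟨W ∪ W', hW.union hW', Set.union_subset_union hsW htW',
        G.act_chi_union_eq_zero hG act_addm act_addf act_conv hW hW' hpW hpW'⟩
    · intro x hx
      obtain ⟨W, hW, hxW, hpW⟩ := hkill x (hU.1 hx)
      exact ⟨W, mem_nhdsWithin_of_mem_nhds (hW.2.1.mem_nhds hxW), W, hW, subset_rfl, hpW⟩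
  apply hp
  calc p = act p (chi 𝕜 (W ∩ U)) := by rw [Set.inter_eq_self_of_subset_right hUW, hpU]
    _ = act (act p (chi 𝕜 W)) (chi 𝕜 U) := (G.act_act_chi act_conv p hW hU).symm
    _ = 0 := by rw [hpW, act_zero_left act_addm]

lemma not_germEq_of_act_sub_chi_ne_zero [AddCommGroup M]
    (act_addm : ∀ m n f, act (m + n) f = act m f + act n f) {x : Γ} {a b : M}
    (h : ∀ W, G.IsCompactOpenUnits W → x ∈ W → act (a - b) (chi 𝕜 W) ≠ 0) :
    ¬ germEq G 𝕜 act x a b := by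
  rintro ⟨W, hWu, hWo, hWc, hxW, hab⟩
  exact h W ⟨hWu, hWo, hWc⟩ hxW (by rw [act_sub_left act_addm, hab, sub_self])

end RightModule

end TopGroupoid

open TopGroupoid in
theorem exists_nonzero_germ_general {Γ : Type} [TopologicalSpace Γ]
    (G : TopGroupoid Γ) (hG : G.Ample) (𝕜 : Type) [CommRing 𝕜]
    (M : Type) [AddCommGroup M] (act : M → (Γ → 𝕜) → M)
    (act_addm : ∀ m n f, act (m + n) f = act m f + act n f)
    (act_addf : ∀ m f₁ f₂, f₁ ∈ G.grpAlg 𝕜 → f₂ ∈ G.grpAlg 𝕜 →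
      act m (f₁ + f₂) = act m f₁ + act m f₂)
    (act_conv : ∀ m f₁ f₂, f₁ ∈ G.grpAlg 𝕜 → f₂ ∈ G.grpAlg 𝕜 →
      act (act m f₁) f₂ = act m (G.conv f₁ f₂))
    (hunit : ∀ m : M, ∃ U : Set Γ, U ⊆ G.units ∧ IsOpen U ∧ IsCompact U ∧
      act m (chi 𝕜 U) = m)
    (m : M) (hm : m ≠ 0) :
    (∃ x ∈ G.units, (∀ W : Set Γ, W ⊆ G.units → IsOpen W → IsCompact W →
      x ∈ W → act m (chi 𝕜 W) ≠ 0) ∧ ¬ germEq G 𝕜 act x m 0) ∧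
    -- hence m ↦ ([m]_x)_x is injective
    (∀ n n' : M, n ≠ n' → ∃ x ∈ G.units, ¬ germEq G 𝕜 act x n n') := by
  have key : ∀ p : M, p ≠ 0 →
      ∃ x ∈ G.units, ∀ W, G.IsCompactOpenUnits W → x ∈ W → act p (chi 𝕜 W) ≠ 0 := by
    intro p hp
    obtain ⟨U, hUu, hUo, hUc, hpU⟩ := hunit p
    exact G.exists_forall_act_chi_ne_zero hG act_addm act_addf act_conv ⟨hUu, hUo, hUc⟩ hpU hp
  obtain ⟨x, hx, hmx⟩ := key m hm
  refine ⟨⟨x, hx, fun W hWu hWo hWc => hmx W ⟨hWu, hWo, hWc⟩,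
    G.not_germEq_of_act_sub_chi_ne_zero act_addm (by simpa only [sub_zero] using hmx)⟩, ?_⟩
  intro n n' hnn'
  obtain ⟨y, hy, hny⟩ := key (n - n') (sub_ne_zero_of_ne hnn')
  exact ⟨y, hy, G.not_germEq_of_act_sub_chi_ne_zero act_addm hny⟩

open TopGroupoid in
/-- If `m ≠ 0` in a unitary right `𝕜𝒢`-module `M` over an ample
groupoid, then there is a point `x` of the unit space such that `mχ_W ≠ 0` for
every compact open neighbourhood `W` of `x`, i.e. the germ `[m]_x` is nonzero;
hence `m ↦ ([m]_x)_x` is injective. -/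
theorem exists_nonzero_germ {Γ : Type} [TopologicalSpace Γ]
    (G : TopGroupoid Γ) (hG : G.Ample) (𝕜 : Type) [CommRing 𝕜]
    (M : Type) [AddCommGroup M] [Module 𝕜 M] (act : M → (Γ → 𝕜) → M)
    (act_addm : ∀ m n f, act (m + n) f = act m f + act n f)
    (act_addf : ∀ m f₁ f₂, f₁ ∈ G.grpAlg 𝕜 → f₂ ∈ G.grpAlg 𝕜 →
      act m (f₁ + f₂) = act m f₁ + act m f₂)
    (act_smulm : ∀ (c : 𝕜) m f, act (c • m) f = c • act m f)
    (act_smulf : ∀ (c : 𝕜) m f, f ∈ G.grpAlg 𝕜 → act m (c • f) = c • act m f)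
    (act_conv : ∀ m f₁ f₂, f₁ ∈ G.grpAlg 𝕜 → f₂ ∈ G.grpAlg 𝕜 →
      act (act m f₁) f₂ = act m (G.conv f₁ f₂))
    (hunit : ∀ m : M, ∃ U : Set Γ, U ⊆ G.units ∧ IsOpen U ∧ IsCompact U ∧
      act m (chi 𝕜 U) = m)
    (m : M) (hm : m ≠ 0) :
    (∃ x ∈ G.units, (∀ W : Set Γ, W ⊆ G.units → IsOpen W → IsCompact W →
      x ∈ W → act m (chi 𝕜 W) ≠ 0) ∧ ¬ germEq G 𝕜 act x m 0) ∧
    -- hence m ↦ ([m]_x)_x is injective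
    (∀ n n' : M, n ≠ n' → ∃ x ∈ G.units, ¬ germEq G 𝕜 act x n n') :=
  exists_nonzero_germ_general G hG 𝕜 M act act_addm act_addf act_conv hunit m hm
end

section
/- Let X be a Hausdorff topological space with a basis of compact open sets and 𝕜 a commutative unital ring. Let C_c(X,𝕜) be the ring of locally constant compactly supported functions X → 𝕜 under pointwise operations. Then the category of sheaves of 𝕜-modules on X is equivalent to the category of unitary right C_c(X,𝕜)-modules, via the compactly supported sections functor and the germ functor M ↦ (stalks M_x = colim_{x∈U} Mχ_U). -/
open CategoryTheory

/-- The ring `C_c(X,𝕜)` of locally constant, compactly supported functions,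
as a subset of `X → 𝕜` (with pointwise operations). -/
def Cc (X : Type) [TopologicalSpace X] (𝕜 : Type) [CommRing 𝕜] : Set (X → 𝕜) :=
  {f | IsLocallyConstant f ∧ ∃ K : Set X, IsCompact K ∧ ∀ x, f x ≠ 0 → x ∈ K}

/-- A sheaf of `𝕜`-modules on `X`: a local homeomorphism `p : E → X` (encoded
via stalks, `E = Σ x, stalk x`, `p = Sigma.fst`) with a `𝕜`-module structure on
each stalk and continuous zero section, addition and scalar multiplication
(`𝕜` discrete). -/
structure SheafMod (X : Type) [TopologicalSpace X] (𝕜 : Type) [CommRing 𝕜] where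
  stalk : X → Type
  addCommGroup : ∀ x, AddCommGroup (stalk x)
  module : ∀ x, Module 𝕜 (stalk x)
  topE : TopologicalSpace (Σ x, stalk x)
  continuous_proj : Continuous (Sigma.fst : (Σ x, stalk x) → X)
  etale_proj : ∀ e : Σ x, stalk x, ∃ U : Set (Σ x, stalk x), e ∈ U ∧ IsOpen U ∧
    Set.InjOn Sigma.fst U ∧ ∀ V, V ⊆ U → IsOpen V → IsOpen (Sigma.fst '' V)
  continuous_zero : Continuous
    (fun x => (⟨x, @OfNat.ofNat _ 0 (@Zero.toOfNat0 _ (addCommGroup x).toZero)⟩ :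
      Σ x, stalk x))
  continuous_add : Continuous
    (fun q : {q : (Σ x, stalk x) × (Σ x, stalk x) // q.1.1 = q.2.1} =>
      (⟨q.1.1.1, @HAdd.hAdd _ _ _ (@instHAdd _ (addCommGroup q.1.1.1).toAdd)
        q.1.1.2 (cast (congrArg stalk q.2).symm q.1.2.2)⟩ : Σ x, stalk x))
  continuous_smul : ∀ c : 𝕜, Continuous
    (fun e : Σ x, stalk x =>
      (⟨e.1, @HSMul.hSMul 𝕜 _ _ (@instHSMul _ _ (module e.1).toSMul) c e.2⟩ :
        Σ x, stalk x))

attribute [instance] SheafMod.addCommGroup SheafMod.module SheafMod.topE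

namespace SheafMod

variable {X : Type} [TopologicalSpace X] {𝕜 : Type} [CommRing 𝕜]
  (F : SheafMod X 𝕜)

/-- Compactly supported continuous global sections. -/
def Γc : Set (∀ x, F.stalk x) :=
  {s | Continuous (fun x => (⟨x, s x⟩ : Σ x, F.stalk x)) ∧
    ∃ K : Set X, IsCompact K ∧ ∀ x, s x ≠ 0 → x ∈ K}

/-- The action of a function on a section: `(s·f)(x) = f(x) • s(x)`. -/
def actSec (s : ∀ x, F.stalk x) (f : X → 𝕜) : ∀ x, F.stalk x :=
  fun x => f x • s x

end SheafMod

/-- Morphisms of sheaves of `𝕜`-modules on `X`. -/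
structure SheafModHom {X : Type} [TopologicalSpace X] {𝕜 : Type} [CommRing 𝕜]
    (F₁ F₂ : SheafMod X 𝕜) where
  map : ∀ x, F₁.stalk x → F₂.stalk x
  map_add : ∀ x a b, map x (a + b) = map x a + map x b
  map_smul : ∀ (x) (c : 𝕜) (a), map x (c • a) = c • map x a
  continuous_map : Continuous
    (fun e : Σ x, F₁.stalk x => (⟨e.1, map e.1 e.2⟩ : Σ x, F₂.stalk x))

instance (X : Type) [TopologicalSpace X] (𝕜 : Type) [CommRing 𝕜] :
    Category (SheafMod X 𝕜) where
  Hom := SheafModHom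
  id F := ⟨fun _ a => a, fun _ _ _ => rfl, fun _ _ _ => rfl, by exact continuous_id⟩
  comp f g := ⟨fun x a => g.map x (f.map x a),
    by intro x a b; show g.map x (f.map x _) = _; rw [f.map_add, g.map_add],
    by intro x c a; show g.map x (f.map x _) = _; rw [f.map_smul, g.map_smul],
    by exact g.continuous_map.comp f.continuous_map⟩
  id_comp f := rfl
  comp_id f := rfl
  assoc f g h := rfl

/-- A unitary right `C_c(X,𝕜)`-module. -/
structure UnitaryCcMod (X : Type) [TopologicalSpace X] (𝕜 : Type) [CommRing 𝕜] where
  M : Type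
  [acg : AddCommGroup M]
  [mod : Module 𝕜 M]
  act : M → (X → 𝕜) → M
  act_addm : ∀ m n f, act (m + n) f = act m f + act n f
  act_addf : ∀ m f₁ f₂, f₁ ∈ Cc X 𝕜 → f₂ ∈ Cc X 𝕜 →
    act m (f₁ + f₂) = act m f₁ + act m f₂
  act_smulm : ∀ (c : 𝕜) m f, act (c • m) f = c • act m f
  act_smulf : ∀ (c : 𝕜) m f, f ∈ Cc X 𝕜 → act m (c • f) = c • act m f
  act_mul : ∀ m f₁ f₂, f₁ ∈ Cc X 𝕜 → f₂ ∈ Cc X 𝕜 →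
    act (act m f₁) f₂ = act m (f₁ * f₂)
  unitary : ∀ m : M, ∃ K : Set X, IsCompact K ∧ IsOpen K ∧
    act m (Set.indicator K 1) = m

attribute [instance] UnitaryCcMod.acg UnitaryCcMod.mod

/-- Morphisms of unitary `C_c(X,𝕜)`-modules. -/
structure UnitaryCcModHom {X : Type} [TopologicalSpace X] {𝕜 : Type}
    [CommRing 𝕜] (A B : UnitaryCcMod X 𝕜) where
  toFun : A.M → B.M
  map_add : ∀ m n, toFun (m + n) = toFun m + toFun n
  map_act : ∀ m f, f ∈ Cc X 𝕜 → toFun (A.act m f) = B.act (toFun m) f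

instance (X : Type) [TopologicalSpace X] (𝕜 : Type) [CommRing 𝕜] :
    Category (UnitaryCcMod X 𝕜) where
  Hom := UnitaryCcModHom
  id A := ⟨fun m => m, fun _ _ => rfl, fun _ _ _ => rfl⟩
  comp f g := ⟨fun m => g.toFun (f.toFun m),
    by intro m n; show g.toFun (f.toFun _) = _; rw [f.map_add, g.map_add],
    by intro m h hh; show g.toFun (f.toFun _) = _;
       rw [f.map_act _ _ hh, g.map_act _ _ hh]⟩
  id_comp f := rfl
  comp_id f := rfl
  assoc f g h := rfl

/-!
A unitary `C_c(X,𝕜)`-module `M` is recovered from its germs: the stalk at `x` is `M` modulo the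
elements killed by some `χ_U` with `U ∋ x` compact open, and the étalé space is topologised by
the graphs of the germ sections `x ↦ [m]_x`. Conversely the compactly supported sections of a
sheaf form a unitary module. Since `X` is Hausdorff, compact open sets are clopen, so `χ_U` is
locally constant and local data on finitely many compact opens can be glued along the disjoint
pieces `U` and `V \ U`; this local-to-global step makes `m ↦ ([m]_x)ₓ` bijective onto sections.
On the sheaf side, two sections agreeing at `x` agree on a compact open neighbourhood of `x`, and
every point of the étalé space lies on a compactly supported section (a local section cut off by
`χ_K`), so evaluating germs of sections is bijective on stalks. A stalkwise bijective morphism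
`φ` is an isomorphism because its inverse carries the graph of `φ ∘ s` onto the graph of `s`.
-/

open Set Topology Function

section CompactOpen

variable {X : Type} [TopologicalSpace X]

def HasCompactOpenBasis (X : Type) [TopologicalSpace X] : Prop :=
  ∀ x : X, ∀ W : Set X, IsOpen W → x ∈ W →
    ∃ K : Set X, x ∈ K ∧ K ⊆ W ∧ IsOpen K ∧ IsCompact K

lemma IsCompact.exists_isCompact_isOpen_superset_of_local {K : Set X} (hK : IsCompact K)
    {P : Set X → Prop} (hempty : P ∅)
    (hunion : ∀ U V, IsCompact U → IsOpen U → IsCompact V → IsOpen V → P U → P V → P (U ∪ V))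
    (hlocal : ∀ x ∈ K, ∃ U, x ∈ U ∧ IsCompact U ∧ IsOpen U ∧ P U) :
    ∃ V, K ⊆ V ∧ IsCompact V ∧ IsOpen V ∧ P V := by
  refine hK.induction_on (p := fun K => ∃ V, K ⊆ V ∧ IsCompact V ∧ IsOpen V ∧ P V)
    ⟨∅, subset_rfl, isCompact_empty, isOpen_empty, hempty⟩ ?_ ?_ ?_
  · rintro L L' hLL' ⟨V, hL'V, hV⟩
    exact ⟨V, hLL'.trans hL'V, hV⟩
  · rintro L L' ⟨V, hLV, hVc, hVo, hV⟩ ⟨V', hL'V', hV'c, hV'o, hV'⟩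
    exact ⟨V ∪ V', union_subset_union hLV hL'V', hVc.union hV'c, hVo.union hV'o,
      hunion V V' hVc hVo hV'c hV'o hV hV'⟩
  · intro x hx
    obtain ⟨U, hxU, hUc, hUo, hU⟩ := hlocal x hx
    exact ⟨U, mem_nhdsWithin_of_mem_nhds (hUo.mem_nhds hxU), U, subset_rfl, hUc, hUo, hU⟩

lemma HasCompactOpenBasis.exists_isCompact_isOpen_superset (hb : HasCompactOpenBasis X)
    {K : Set X} (hK : IsCompact K) : ∃ V, K ⊆ V ∧ IsCompact V ∧ IsOpen V := by
  obtain ⟨V, hKV, hVc, hVo, -⟩ := hK.exists_isCompact_isOpen_superset_of_local (P := fun _ => True)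
    trivial (fun _ _ _ _ _ _ _ _ => trivial) fun x _ => by
      obtain ⟨U, hxU, -, hUo, hUc⟩ := hb x univ isOpen_univ (mem_univ x)
      exact ⟨U, hxU, hUc, hUo, trivial⟩
  exact ⟨V, hKV, hVc, hVo⟩

variable {𝕜 : Type} [CommRing 𝕜]

lemma zero_mem_Cc : (0 : X → 𝕜) ∈ Cc X 𝕜 :=
  ⟨IsLocallyConstant.const 0, ∅, isCompact_empty, fun _ h => absurd rfl h⟩

lemma add_mem_Cc {f g : X → 𝕜} (hf : f ∈ Cc X 𝕜) (hg : g ∈ Cc X 𝕜) : f + g ∈ Cc X 𝕜 := by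
  obtain ⟨hfl, K, hK, hfK⟩ := hf
  obtain ⟨hgl, L, hL, hgL⟩ := hg
  exact ⟨hfl.add hgl, K ∪ L, hK.union hL,
    fun x hx => (Function.support_add f g hx).imp (hfK x) (hgL x)⟩

lemma smul_mem_Cc (c : 𝕜) {f : X → 𝕜} (hf : f ∈ Cc X 𝕜) : c • f ∈ Cc X 𝕜 := by
  obtain ⟨hfl, K, hK, hfK⟩ := hf
  exact ⟨hfl.comp (c * ·), K, hK, fun x hx => hfK x (right_ne_zero_of_mul hx)⟩

lemma mul_mem_Cc {f g : X → 𝕜} (hf : f ∈ Cc X 𝕜) (hg : g ∈ Cc X 𝕜) : f * g ∈ Cc X 𝕜 := by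
  obtain ⟨hfl, K, hK, hfK⟩ := hf
  exact ⟨hfl.mul hg.1, K, hK, fun x hx => hfK x (left_ne_zero_of_mul hx)⟩

lemma indicator_one_mem_Cc [T2Space X] {U : Set X} (hUc : IsCompact U) (hUo : IsOpen U) :
    U.indicator 1 ∈ Cc X 𝕜 :=
  ⟨(LocallyConstant.indicator 1 ⟨hUc.isClosed, hUo⟩).isLocallyConstant, U, hUc,
    fun _ hx => by_contra fun h => hx (indicator_of_notMem h 1)⟩

end CompactOpen

namespace SheafMod

variable {X : Type} [TopologicalSpace X] {𝕜 : Type} [CommRing 𝕜] {F F₁ F₂ : SheafMod X 𝕜}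

lemma continuous_section_add {s t : ∀ x, F.stalk x}
    (hs : Continuous fun x => (⟨x, s x⟩ : Σ x, F.stalk x))
    (ht : Continuous fun x => (⟨x, t x⟩ : Σ x, F.stalk x)) :
    Continuous fun x => (⟨x, s x + t x⟩ : Σ x, F.stalk x) := by
  exact F.continuous_add.comp ((hs.prodMk ht).subtype_mk fun _ => rfl)

lemma continuous_section_smul (c : 𝕜) {s : ∀ x, F.stalk x}
    (hs : Continuous fun x => (⟨x, s x⟩ : Σ x, F.stalk x)) :
    Continuous fun x => (⟨x, c • s x⟩ : Σ x, F.stalk x) :=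
  (F.continuous_smul c).comp hs

variable (F) in
def ΓcSubmodule : Submodule 𝕜 (∀ x, F.stalk x) where
  carrier := F.Γc
  add_mem' := by
    rintro s t ⟨hs, K, hK, hsK⟩ ⟨ht, L, hL, htL⟩
    exact ⟨continuous_section_add hs ht, K ∪ L, hK.union hL,
      fun x hx => (not_and_or.1 fun h => hx (by simp [h.1, h.2])).imp (hsK x) (htL x)⟩
  zero_mem' := ⟨F.continuous_zero, ∅, isCompact_empty, fun _ h => absurd rfl h⟩
  smul_mem' := by
    rintro c s ⟨hs, K, hK, hsK⟩
    exact ⟨continuous_section_smul c hs, K, hK,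
      fun x hx => hsK x (right_ne_zero_of_smul (show c • s x ≠ 0 from hx))⟩

lemma isOpen_setOf_section_eq {s t : ∀ x, F.stalk x}
    (hs : Continuous fun x => (⟨x, s x⟩ : Σ x, F.stalk x))
    (ht : Continuous fun x => (⟨x, t x⟩ : Σ x, F.stalk x)) :
    IsOpen {x | s x = t x} := by
  refine isOpen_iff_mem_nhds.2 fun x hx => ?_
  obtain ⟨O, hxO, hOo, hinj, -⟩ := F.etale_proj ⟨x, s x⟩
  have hxO' : (⟨x, t x⟩ : Σ x, F.stalk x) ∈ O := by rwa [← show s x = t x from hx]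
  filter_upwards [hs.continuousAt.preimage_mem_nhds (hOo.mem_nhds hxO),
    ht.continuousAt.preimage_mem_nhds (hOo.mem_nhds hxO')] with y hsy hty
  exact eq_of_heq (Sigma.mk.inj_iff.1 (hinj hsy hty rfl)).2

lemma isOpen_sectionGraph {s : ∀ x, F.stalk x}
    (hs : Continuous fun x => (⟨x, s x⟩ : Σ x, F.stalk x)) {U : Set X} (hU : IsOpen U) :
    IsOpen {e : Σ x, F.stalk x | e.1 ∈ U ∧ e.2 = s e.1} := by
  refine isOpen_iff_mem_nhds.2 ?_
  rintro ⟨x, a⟩ ⟨hxU, ha : a = s x⟩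
  subst ha
  obtain ⟨O, hxO, hOo, hinj, -⟩ := F.etale_proj ⟨x, s x⟩
  have hW : IsOpen (U ∩ (fun y => (⟨y, s y⟩ : Σ x, F.stalk x)) ⁻¹' O) :=
    hU.inter (hOo.preimage hs)
  filter_upwards [hOo.mem_nhds hxO,
    F.continuous_proj.continuousAt.preimage_mem_nhds (hW.mem_nhds ⟨hxU, hxO⟩)]
    with ⟨y, a⟩ hyO ⟨hyU, hsyO⟩
  exact ⟨hyU, eq_of_heq (Sigma.mk.inj_iff.1 (hinj hyO hsyO rfl)).2⟩

lemma actSec_mem_Γc {f : X → 𝕜} (hf : f ∈ Cc X 𝕜) {s : ∀ x, F.stalk x} (hs : s ∈ F.Γc) :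
    F.actSec s f ∈ F.Γc := by
  obtain ⟨hsc, K, hK, hsK⟩ := hs
  refine ⟨continuous_iff_continuousAt.2 fun x => ?_, K, hK,
    fun x hx => hsK x (right_ne_zero_of_smul hx)⟩
  refine (continuous_section_smul (f x) hsc).continuousAt.congr ?_
  filter_upwards [hf.1.eventually_eq x] with y hy
  rw [actSec, hy]

attribute [ext] SheafModHom

lemma hom_ext {φ ψ : F₁ ⟶ F₂} (h : ∀ x a, φ.map x a = ψ.map x a) : φ = ψ :=
  SheafModHom.ext (funext₂ h)

def _root_.SheafModHom.toLinearMap (φ : SheafModHom F₁ F₂) (x : X) :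
    F₁.stalk x →ₗ[𝕜] F₂.stalk x where
  toFun := φ.map x
  map_add' := φ.map_add x
  map_smul' := φ.map_smul x

variable [T2Space X]

lemma exists_mem_Γc_apply_eq (hb : HasCompactOpenBasis X) (x : X) (a : F.stalk x) :
    ∃ s ∈ F.Γc, s x = a := by
  classical
  obtain ⟨O, haO, hOo, hinj, himg⟩ := F.etale_proj ⟨x, a⟩
  obtain ⟨K, hxK, hKO, hKo, hKc⟩ := hb x _ (himg O subset_rfl hOo) ⟨_, haO, rfl⟩
  have hlift : ∀ y ∈ K, ∃ b : F.stalk y, (⟨y, b⟩ : Σ x, F.stalk x) ∈ O := by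
    intro y hy
    obtain ⟨⟨_, b⟩, hbO, rfl⟩ := hKO hy
    exact ⟨b, hbO⟩
  let s : ∀ y, F.stalk y := fun y => if h : y ∈ K then (hlift y h).choose else 0
  have hsO : ∀ y ∈ K, (⟨y, s y⟩ : Σ x, F.stalk x) ∈ O := fun y hy => by
    simp only [s, dif_pos hy]
    exact (hlift y hy).choose_spec
  have hsK : ∀ y ∉ K, s y = 0 := fun y hy => dif_neg hy
  refine ⟨s, ⟨continuous_iff_continuousAt.2 fun y => ?_, K, hKc,
    fun y hy => not_not.1 (mt (hsK y) hy)⟩,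
    eq_of_heq (Sigma.mk.inj_iff.1 (hinj (hsO x hxK) haO rfl)).2⟩
  by_cases hy : y ∈ K
  · -- on `K`, the section `s` inverts the homeomorphism `Sigma.fst : O → Sigma.fst '' O`
    refine (nhds_basis_opens _).tendsto_right_iff.2 fun O' ⟨hyO', hO'o⟩ => ?_
    filter_upwards [(hKo.inter (himg _ inter_subset_left (hOo.inter hO'o))).mem_nhds
      ⟨hy, _, ⟨hsO y hy, hyO'⟩, rfl⟩] with z ⟨hzK, w, ⟨hwO, hwO'⟩, hwz⟩
    rwa [← hinj hwO (hsO z hzK) hwz]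
  · refine F.continuous_zero.continuousAt.congr ?_
    filter_upwards [hKc.isClosed.isOpen_compl.mem_nhds hy] with z hz
    rw [hsK z hz]

lemma isIso_of_bijective (hb : HasCompactOpenBasis X) (φ : F₁ ⟶ F₂)
    (hφ : ∀ x, Bijective (φ.map x)) : IsIso φ := by
  let e x := LinearEquiv.ofBijective (φ.toLinearMap x) (hφ x)
  have he : ∀ x a, (e x).symm (φ.map x a) = a := fun x => (e x).symm_apply_apply
  let ψ : F₂ ⟶ F₁ := ⟨fun x => (e x).symm, fun x => map_add _, fun x => map_smul _, by
    refine continuous_iff_continuousAt.2 fun ⟨x, b⟩ =>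
      (nhds_basis_opens _).tendsto_right_iff.2 fun O ⟨hbO, hOo⟩ => ?_
    obtain ⟨s, ⟨hsc, -⟩, hsx⟩ := exists_mem_Γc_apply_eq hb x ((e x).symm b)
    have hφb : φ.map x (s x) = b := by rw [hsx]; exact (e x).apply_symm_apply b
    filter_upwards [(isOpen_sectionGraph (φ.continuous_map.comp hsc)
      (hOo.preimage hsc)).mem_nhds ⟨show (⟨x, s x⟩ : Σ x, F₁.stalk x) ∈ O by rwa [hsx], hφb.symm⟩]
      with ⟨y, c⟩ ⟨hyO, hc⟩
    dsimp only at hc ⊢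
    rwa [hc, he]⟩
  exact ⟨ψ, hom_ext fun x a => he x a, hom_ext fun x b => (e x).apply_symm_apply b⟩

end SheafMod

namespace UnitaryCcMod

variable {X : Type} [TopologicalSpace X] {𝕜 : Type} [CommRing 𝕜]

section

variable (A : UnitaryCcMod X 𝕜)

lemma zero_act (f : X → 𝕜) : A.act 0 f = 0 := by
  simpa using A.act_addm 0 0 f

lemma sub_act (m n : A.M) (f : X → 𝕜) : A.act (m - n) f = A.act m f - A.act n f :=
  (AddMonoidHom.mk' (A.act · f) fun m n => A.act_addm m n f).map_sub m n

lemma act_zero (m : A.M) : A.act m 0 = 0 := by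
  simpa using A.act_smulf 0 m 0 zero_mem_Cc

variable {A B : UnitaryCcMod X 𝕜}

attribute [ext] UnitaryCcModHom

lemma hom_ext {φ ψ : A ⟶ B} (h : ∀ m, φ.toFun m = ψ.toFun m) : φ = ψ :=
  UnitaryCcModHom.ext (funext h)

lemma isIso_of_bijective (φ : A ⟶ B) (hφ : Bijective φ.toFun) : IsIso φ := by
  let e := Equiv.ofBijective _ hφ
  have he : ∀ n, φ.toFun (e.symm n) = n := e.apply_symm_apply
  let ψ : B ⟶ A := ⟨e.symm,
    fun m n => hφ.1 (by rw [φ.map_add, he, he, he]),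
    fun m f hf => hφ.1 (by rw [φ.map_act _ _ hf, he, he])⟩
  exact ⟨ψ, hom_ext e.symm_apply_apply, hom_ext e.apply_symm_apply⟩

end

open TopologicalSpace

variable [T2Space X]

section

variable (A : UnitaryCcMod X 𝕜) {U V : Set X}

lemma act_act_indicator (hUc : IsCompact U) (hUo : IsOpen U) (hVc : IsCompact V)
    (hVo : IsOpen V) (m : A.M) :
    A.act (A.act m (U.indicator 1)) (V.indicator 1) = A.act m ((U ∩ V).indicator 1) := by
  rw [A.act_mul _ _ _ (indicator_one_mem_Cc hUc hUo) (indicator_one_mem_Cc hVc hVo),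
    inter_indicator_one]

lemma act_indicator_union (hUc : IsCompact U) (hUo : IsOpen U) (hVc : IsCompact V)
    (hVo : IsOpen V) (m : A.M) :
    A.act m ((U ∪ V).indicator 1) = A.act m (U.indicator 1) + A.act m ((V \ U).indicator 1) := by
  rw [← union_sdiff_self, ← A.act_addf _ _ _ (indicator_one_mem_Cc hUc hUo)
    (indicator_one_mem_Cc (hVc.diff hUo) (hVo.sdiff hUc.isClosed)),
    indicator_union_of_disjoint disjoint_sdiff_right]
  rfl

end

section

variable {A B : UnitaryCcMod X 𝕜}

lemma _root_.UnitaryCcModHom.map_smul (φ : UnitaryCcModHom A B) (c : 𝕜) (m : A.M) :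
    φ.toFun (c • m) = c • φ.toFun m := by
  obtain ⟨K, hKc, hKo, hK⟩ := A.unitary m
  have hχ := indicator_one_mem_Cc (𝕜 := 𝕜) hKc hKo
  calc φ.toFun (c • m) = φ.toFun (A.act m (c • K.indicator 1)) := by rw [A.act_smulf _ _ _ hχ, hK]
    _ = c • φ.toFun (A.act m (K.indicator 1)) := by
      rw [φ.map_act _ _ (smul_mem_Cc c hχ), B.act_smulf _ _ _ hχ, φ.map_act _ _ hχ]
    _ = c • φ.toFun m := by rw [hK]

def _root_.UnitaryCcModHom.toLinearMap (φ : UnitaryCcModHom A B) : A.M →ₗ[𝕜] B.M where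
  toFun := φ.toFun
  map_add' := φ.map_add
  map_smul' := φ.map_smul

end

variable (hb : HasCompactOpenBasis X) (A : UnitaryCcMod X 𝕜)

-- `A.M ⧸ A.vanishingNear hb x` is the stalk `colim_{x ∈ U} A.M χ_U` of the germ sheaf.
def vanishingNear (x : X) : Submodule 𝕜 A.M where
  carrier := {m | ∃ U, x ∈ U ∧ IsCompact U ∧ IsOpen U ∧ A.act m (U.indicator 1) = 0}
  add_mem' := by
    rintro m n ⟨U, hxU, hUc, hUo, hmU⟩ ⟨V, hxV, hVc, hVo, hnV⟩
    refine ⟨U ∩ V, ⟨hxU, hxV⟩, hUc.inter hVc, hUo.inter hVo, ?_⟩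
    rw [A.act_addm, ← A.act_act_indicator hUc hUo hVc hVo m, hmU, inter_comm U V,
      ← A.act_act_indicator hVc hVo hUc hUo n, hnV, zero_act, zero_act, add_zero]
  zero_mem' := by
    obtain ⟨K, hxK, -, hKo, hKc⟩ := hb x univ isOpen_univ (mem_univ x)
    exact ⟨K, hxK, hKc, hKo, A.zero_act _⟩
  smul_mem' := by
    rintro c m ⟨U, hxU, hUc, hUo, hmU⟩
    exact ⟨U, hxU, hUc, hUo, by rw [A.act_smulm, hmU, smul_zero]⟩

def germ (x : X) : A.M →ₗ[𝕜] A.M ⧸ A.vanishingNear hb x :=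
  (A.vanishingNear hb x).mkQ

variable {hb A}

lemma germ_surjective (x : X) : Surjective (A.germ hb x) :=
  Submodule.mkQ_surjective _

lemma germ_eq_zero_iff {x : X} {m : A.M} : A.germ hb x m = 0 ↔ m ∈ A.vanishingNear hb x :=
  Submodule.Quotient.mk_eq_zero _

lemma germ_eq_germ_iff {x : X} {m n : A.M} :
    A.germ hb x m = A.germ hb x n ↔ m - n ∈ A.vanishingNear hb x :=
  Submodule.Quotient.eq _

lemma eventually_germ_eq {x : X} {m n : A.M} (h : A.germ hb x m = A.germ hb x n) :
    ∀ᶠ y in 𝓝 x, A.germ hb y m = A.germ hb y n := by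
  obtain ⟨U, hxU, hUc, hUo, hU⟩ := germ_eq_germ_iff.1 h
  filter_upwards [hUo.mem_nhds hxU] with y hy
  exact germ_eq_germ_iff.2 ⟨U, hy, hUc, hUo, hU⟩

lemma germ_act {f : X → 𝕜} (hf : f ∈ Cc X 𝕜) (m : A.M) (x : X) :
    A.germ hb x (A.act m f) = f x • A.germ hb x m := by
  rw [← map_smul, germ_eq_germ_iff]
  obtain ⟨W, hWo, hxW, hfW⟩ := hf.1.exists_open x
  obtain ⟨U, hxU, hUW, hUo, hUc⟩ := hb x W hWo hxW
  have hχ := indicator_one_mem_Cc (𝕜 := 𝕜) hUc hUo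
  have hfU : f * U.indicator 1 = f x • U.indicator 1 := by
    ext y
    by_cases hy : y ∈ U <;> simp [hy, hfW y (hUW _)]
  refine ⟨U, hxU, hUc, hUo, ?_⟩
  rw [sub_act, A.act_mul _ _ _ hf hχ, hfU, A.act_smulf _ _ _ hχ, A.act_smulm, sub_self]

variable (hb A)

def germGraph (m : A.M) (U : Set X) : Set (Σ x, A.M ⧸ A.vanishingNear hb x) :=
  {e | e.1 ∈ U ∧ e.2 = A.germ hb e.1 m}

/-- The étalé topology, generated by the graphs of the germ sections `x ↦ germ x m`. -/
abbrev germTopology : TopologicalSpace (Σ x, A.M ⧸ A.vanishingNear hb x) :=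
  generateFrom {S | ∃ m U, IsOpen U ∧ S = A.germGraph hb m U}

attribute [local instance] germTopology

variable {hb A}

lemma isOpen_germGraph (m : A.M) {U : Set X} (hU : IsOpen U) : IsOpen (A.germGraph hb m U) :=
  GenerateOpen.basic _ ⟨m, U, hU, rfl⟩

lemma continuous_germ_section (m : A.M) :
    Continuous fun x => (⟨x, A.germ hb x m⟩ : Σ x, A.M ⧸ A.vanishingNear hb x) := by
  refine continuous_generateFrom_iff.2 ?_
  rintro _ ⟨n, U, hU, rfl⟩
  exact hU.inter (isOpen_iff_mem_nhds.2 fun x hx => eventually_germ_eq hx)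

lemma continuous_of_forall_continuous_germ {T : Type*} [TopologicalSpace T]
    {φ : (Σ x, A.M ⧸ A.vanishingNear hb x) → T}
    (h : ∀ m, Continuous fun x => φ ⟨x, A.germ hb x m⟩) : Continuous φ := by
  refine continuous_def.2 fun O hO => ?_
  have hpre : φ ⁻¹' O = ⋃ m, A.germGraph hb m ((fun x => φ ⟨x, A.germ hb x m⟩) ⁻¹' O) := by
    ext ⟨x, ξ⟩
    obtain ⟨m, rfl⟩ := germ_surjective x ξ
    simp only [germGraph, mem_preimage, mem_iUnion, mem_ofPred_eq]
    refine ⟨fun hx => ⟨m, hx, rfl⟩, ?_⟩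
    rintro ⟨n, hx, hmn⟩
    rwa [hmn]
  rw [hpre]
  exact isOpen_iUnion fun m => isOpen_germGraph m (hO.preimage (h m))

lemma continuous_germ_fst :
    Continuous (Sigma.fst : (Σ x, A.M ⧸ A.vanishingNear hb x) → X) :=
  continuous_of_forall_continuous_germ fun _ => continuous_id

variable (hb A)

def germSheaf : SheafMod X 𝕜 where
  stalk x := A.M ⧸ A.vanishingNear hb x
  addCommGroup _ := inferInstance
  module _ := inferInstance
  topE := germTopology hb A
  continuous_proj := continuous_germ_fst
  etale_proj := by
    rintro ⟨x, ξ⟩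
    obtain ⟨m, rfl⟩ := germ_surjective x ξ
    refine ⟨A.germGraph hb m univ, ⟨trivial, rfl⟩, isOpen_germGraph m isOpen_univ, ?_,
      fun V hV hVo => ?_⟩
    · rintro ⟨a, α⟩ ⟨-, hα⟩ ⟨b, β⟩ ⟨-, hβ⟩ (rfl : a = b)
      dsimp only at hα hβ
      rw [hα, hβ]
    · convert (continuous_germ_section m).isOpen_preimage V hVo
      ext y
      refine ⟨?_, fun hy => ⟨_, hy, rfl⟩⟩
      rintro ⟨⟨a, α⟩, haV, rfl⟩
      obtain ⟨-, hα : α = _⟩ := hV haV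
      rwa [hα] at haV
  continuous_zero := by
    simpa only [map_zero] using continuous_germ_section (A := A) 0
  continuous_add := by
    refine continuous_iff_continuousAt.2 ?_
    rintro ⟨⟨⟨x, ξ⟩, ⟨x', ζ⟩⟩, hq : x = x'⟩
    subst hq
    obtain ⟨m, rfl⟩ := germ_surjective x ξ
    obtain ⟨n, rfl⟩ := germ_surjective x ζ
    have hval : Continuous fun q : {q : (Σ x, A.M ⧸ A.vanishingNear hb x) ×
        (Σ x, A.M ⧸ A.vanishingNear hb x) // q.1.1 = q.2.1} => q.1 := continuous_subtype_val
    refine ((continuous_germ_section (m + n)).comp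
      (continuous_germ_fst.comp (continuous_fst.comp hval))).continuousAt.congr ?_
    filter_upwards [(continuous_fst.comp hval).continuousAt.preimage_mem_nhds
        ((isOpen_germGraph m isOpen_univ).mem_nhds ⟨trivial, rfl⟩),
      (continuous_snd.comp hval).continuousAt.preimage_mem_nhds
        ((isOpen_germGraph n isOpen_univ).mem_nhds ⟨trivial, rfl⟩)]
      with ⟨⟨⟨y, α⟩, ⟨y', β⟩⟩, hy⟩ ⟨_, hα⟩ ⟨_, hβ⟩
    change y = y' at hy
    subst hy
    change α = A.germ hb y m at hα
    change β = A.germ hb y n at hβ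
    subst hα hβ
    exact congrArg (Sigma.mk y) (map_add _ m n)
  continuous_smul c := continuous_of_forall_continuous_germ fun m => by
    simpa only [map_smul] using continuous_germ_section (c • m)

noncomputable def germMap {A B : UnitaryCcMod X 𝕜} (φ : A ⟶ B) :
    A.germSheaf hb ⟶ B.germSheaf hb where
  map x := (A.vanishingNear hb x).mapQ (B.vanishingNear hb x) φ.toLinearMap
    fun _ ⟨U, hxU, hUc, hUo, hU⟩ => ⟨U, hxU, hUc, hUo, by
      show B.act (φ.toFun _) _ = 0
      rw [← φ.map_act _ _ (indicator_one_mem_Cc hUc hUo), hU]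
      exact map_zero φ.toLinearMap⟩
  map_add _ := map_add _
  map_smul _ := map_smul _
  continuous_map := continuous_of_forall_continuous_germ fun m =>
    continuous_germ_section (φ.toFun m)

noncomputable def germFunctor : UnitaryCcMod X 𝕜 ⥤ SheafMod X 𝕜 where
  obj A := A.germSheaf hb
  map φ := germMap hb φ
  map_id A := SheafMod.hom_ext fun x ξ => by
    obtain ⟨m, rfl⟩ := germ_surjective x ξ
    rfl
  map_comp φ ψ := SheafMod.hom_ext fun x ξ => by
    obtain ⟨m, rfl⟩ := germ_surjective x ξ
    rfl

end UnitaryCcMod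

namespace SheafMod

open UnitaryCcMod

variable {X : Type} [TopologicalSpace X] [T2Space X] (hb : HasCompactOpenBasis X)
  {𝕜 : Type} [CommRing 𝕜]

open Classical in
noncomputable abbrev sectionsModule (F : SheafMod X 𝕜) : UnitaryCcMod X 𝕜 where
  M := F.ΓcSubmodule
  act s f := if hf : f ∈ Cc X 𝕜 then ⟨F.actSec s.1 f, actSec_mem_Γc hf s.2⟩ else 0
  act_addm s t f := by
    split_ifs
    · exact Subtype.ext (funext fun x => smul_add (f x) (s.1 x) (t.1 x))
    · exact (add_zero 0).symm
  act_addf s f₁ f₂ h₁ h₂ := by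
    rw [dif_pos h₁, dif_pos h₂, dif_pos (add_mem_Cc h₁ h₂)]
    exact Subtype.ext (funext fun x => add_smul (f₁ x) (f₂ x) (s.1 x))
  act_smulm c s f := by
    split_ifs
    · exact Subtype.ext (funext fun x => smul_comm (f x) c (s.1 x))
    · exact (smul_zero c).symm
  act_smulf c s f hf := by
    rw [dif_pos hf, dif_pos (smul_mem_Cc c hf)]
    exact Subtype.ext (funext fun x => mul_smul c (f x) (s.1 x))
  act_mul s f₁ f₂ h₁ h₂ := by
    rw [dif_pos h₁, dif_pos h₂, dif_pos (mul_mem_Cc h₁ h₂)]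
    refine Subtype.ext (funext fun x => ?_)
    show f₂ x • f₁ x • s.1 x = (f₁ x * f₂ x) • s.1 x
    rw [smul_smul, mul_comm]
  unitary s := by
    obtain ⟨-, K, hKc, hsK⟩ := s.2
    obtain ⟨W, hKW, hWc, hWo⟩ := hb.exists_isCompact_isOpen_superset hKc
    refine ⟨W, hWc, hWo, ?_⟩
    rw [dif_pos (indicator_one_mem_Cc hWc hWo)]
    refine Subtype.ext (funext fun x => ?_)
    by_cases hx : x ∈ W
    · simp [actSec, hx]
    · simp [actSec, hx, not_not.1 fun h => hx (hKW (hsK x h))]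

variable {hb} in
lemma sectionsModule_act {F : SheafMod X 𝕜} {f : X → 𝕜} (hf : f ∈ Cc X 𝕜)
    (s : (F.sectionsModule hb).M) :
    (F.sectionsModule hb).act s f = ⟨F.actSec s.1 f, actSec_mem_Γc hf s.2⟩ :=
  dif_pos hf

noncomputable def sectionsMap {F₁ F₂ : SheafMod X 𝕜} (φ : F₁ ⟶ F₂) :
    F₁.sectionsModule hb ⟶ F₂.sectionsModule hb where
  toFun s := ⟨fun x => φ.map x (s.1 x), φ.continuous_map.comp s.2.1, by
    obtain ⟨-, K, hKc, hsK⟩ := s.2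
    refine ⟨K, hKc, fun x hx => hsK x fun h => hx ?_⟩
    show φ.map x (s.1 x) = 0
    rw [h]
    exact map_zero (φ.toLinearMap x)⟩
  map_add s t := Subtype.ext (funext fun x => φ.map_add x _ _)
  map_act s f hf := by
    simp only [sectionsModule, dif_pos hf]
    exact Subtype.ext (funext fun x => φ.map_smul x _ _)

noncomputable def sectionsFunctor : SheafMod X 𝕜 ⥤ UnitaryCcMod X 𝕜 where
  obj F := F.sectionsModule hb
  map φ := sectionsMap hb φ

lemma apply_eq_zero_of_mem_vanishingNear {F : SheafMod X 𝕜} {x : X}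
    {s : (F.sectionsModule hb).M} (hs : s ∈ (F.sectionsModule hb).vanishingNear hb x) :
    s.1 x = 0 := by
  obtain ⟨U, hxU, hUc, hUo, hU⟩ := hs
  rw [sectionsModule_act (indicator_one_mem_Cc hUc hUo)] at hU
  simpa [actSec, hxU] using congrFun (congrArg Subtype.val hU) x

noncomputable def germEval (F : SheafMod X 𝕜) : (F.sectionsModule hb).germSheaf hb ⟶ F where
  map x := Submodule.liftQ _ (LinearMap.proj (R := 𝕜) (φ := F.stalk) x ∘ₗ F.ΓcSubmodule.subtype)
    fun _ hs => LinearMap.mem_ker.2 (apply_eq_zero_of_mem_vanishingNear hb hs)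
  map_add _ := map_add _
  map_smul _ := map_smul _
  continuous_map := continuous_of_forall_continuous_germ fun s => s.2.1

lemma germEval_bijective (F : SheafMod X 𝕜) (x : X) : Bijective ((germEval hb F).map x) := by
  refine ⟨fun a b hab => ?_, fun a => ?_⟩
  · obtain ⟨s, rfl⟩ := germ_surjective x a
    obtain ⟨t, rfl⟩ := germ_surjective x b
    change s.1 x = t.1 x at hab
    obtain ⟨U, hxU, hU, hUo, hUc⟩ := hb x _ (isOpen_setOf_section_eq s.2.1 t.2.1) hab
    refine germ_eq_germ_iff.2 ⟨U, hxU, hUc, hUo, ?_⟩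
    rw [sectionsModule_act (indicator_one_mem_Cc hUc hUo)]
    refine Subtype.ext (funext fun y => ?_)
    by_cases hy : y ∈ U
    · simp [actSec, hy, show s.1 y = t.1 y from hU hy]
    · simp [actSec, hy]
  · obtain ⟨s, hs, rfl⟩ := exists_mem_Γc_apply_eq hb x a
    exact ⟨(F.sectionsModule hb).germ hb x ⟨s, hs⟩, rfl⟩

end SheafMod

namespace UnitaryCcMod

open SheafMod

variable {X : Type} [TopologicalSpace X] [T2Space X] (hb : HasCompactOpenBasis X)
  {𝕜 : Type} [CommRing 𝕜] (A : UnitaryCcMod X 𝕜)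

noncomputable def toSectionsGermSheaf : A ⟶ (A.germSheaf hb).sectionsModule hb where
  toFun m := ⟨fun x => A.germ hb x m, continuous_germ_section m, by
    obtain ⟨K, hKc, hKo, hK⟩ := A.unitary m
    refine ⟨K, hKc, fun x hx => by_contra fun hxK => hx ?_⟩
    show A.germ hb x m = 0
    rw [← hK, germ_act (indicator_one_mem_Cc hKc hKo), indicator_of_notMem hxK, zero_smul]⟩
  map_add m n := Subtype.ext (funext fun x => map_add _ m n)
  map_act m f hf := by
    rw [sectionsModule_act hf]
    exact Subtype.ext (funext fun x => germ_act hf m x)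

variable {hb A}

lemma eq_zero_of_forall_germ_eq_zero {m : A.M} (h : ∀ x, A.germ hb x m = 0) : m = 0 := by
  obtain ⟨K, hKc, hKo, hK⟩ := A.unitary m
  obtain ⟨V, hKV, hVc, hVo, hV⟩ := hKc.exists_isCompact_isOpen_superset_of_local
    (P := fun V => A.act m (V.indicator 1) = 0) (by rw [indicator_empty', act_zero])
    (fun U V hUc hUo hVc hVo hU hV => by
      rw [act_indicator_union A hUc hUo hVc hVo, hU, ← inter_eq_right.2 sdiff_subset,
        ← act_act_indicator A hVc hVo (hVc.diff hUo) (hVo.sdiff hUc.isClosed), hV, zero_act,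
        add_zero])
    fun x _ => germ_eq_zero_iff.1 (h x)
  rw [← hK, ← inter_eq_right.2 hKV, ← act_act_indicator A hVc hVo hKc hKo, hV, zero_act]

lemma exists_forall_germ_eq {s : ∀ x, A.M ⧸ A.vanishingNear hb x} (hs : s ∈ (A.germSheaf hb).Γc) :
    ∃ m, ∀ x, A.germ hb x m = s x := by
  obtain ⟨hsc, K, hKc, hsK⟩ := hs
  obtain ⟨V, hKV, hVc, hVo, m, hm⟩ := hKc.exists_isCompact_isOpen_superset_of_local
    (P := fun V => ∃ m, ∀ x ∈ V, A.germ hb x m = s x) ⟨0, fun _ h => h.elim⟩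
    (fun U V hUc hUo hVc hVo ⟨m, hm⟩ ⟨n, hn⟩ => by
      refine ⟨A.act m (U.indicator 1) + A.act n ((V \ U).indicator 1), fun x hx => ?_⟩
      rw [map_add, germ_act (indicator_one_mem_Cc hUc hUo),
        germ_act (indicator_one_mem_Cc (hVc.diff hUo) (hVo.sdiff hUc.isClosed))]
      by_cases hxU : x ∈ U
      · simp [hxU, hm x hxU]
      · simp [hxU, hx.resolve_left hxU, hn x (hx.resolve_left hxU)])
    fun x _ => by
      obtain ⟨m, hm⟩ := germ_surjective x (s x)
      obtain ⟨U, hxU, hUW, hUo, hUc⟩ :=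
        hb x _ ((isOpen_germGraph m isOpen_univ).preimage hsc) ⟨trivial, hm.symm⟩
      exact ⟨U, hxU, hUc, hUo, m, fun y hy => (hUW hy).2.symm⟩
  refine ⟨A.act m (V.indicator 1), fun x => ?_⟩
  rw [germ_act (indicator_one_mem_Cc hVc hVo)]
  by_cases hx : x ∈ V
  · simp [hx, hm x hx]
  · rw [indicator_of_notMem hx, zero_smul]
    exact (not_not.1 fun h => hx (hKV (hsK x h))).symm

variable (hb A)

lemma toSectionsGermSheaf_bijective : Bijective (A.toSectionsGermSheaf hb).toFun := by
  refine ⟨fun m n hmn => sub_eq_zero.1 (eq_zero_of_forall_germ_eq_zero (hb := hb) fun x => ?_),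
    fun s => ?_⟩
  · rw [map_sub, sub_eq_zero]
    exact congrFun (congrArg Subtype.val hmn) x
  · obtain ⟨m, hm⟩ := exists_forall_germ_eq s.2
    exact ⟨m, Subtype.ext (funext hm)⟩

end UnitaryCcMod

section

open SheafMod UnitaryCcMod

variable {X : Type} [TopologicalSpace X] [T2Space X] (hb : HasCompactOpenBasis X)
  {𝕜 : Type} [CommRing 𝕜]

instance (F : SheafMod X 𝕜) : IsIso (germEval hb F) :=
  SheafMod.isIso_of_bijective hb _ (germEval_bijective hb F)

instance (A : UnitaryCcMod X 𝕜) : IsIso (A.toSectionsGermSheaf hb) :=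
  UnitaryCcMod.isIso_of_bijective _ (A.toSectionsGermSheaf_bijective hb)

noncomputable def sheafModEquivUnitaryCcMod : SheafMod X 𝕜 ≌ UnitaryCcMod X 𝕜 :=
  CategoryTheory.Equivalence.mk (sectionsFunctor hb) (germFunctor hb)
    (NatIso.ofComponents (fun (F : SheafMod X 𝕜) => (asIso (germEval hb F) :)) fun _ =>
      SheafMod.hom_ext fun x ξ => by
        obtain ⟨s, rfl⟩ := germ_surjective x ξ
        rfl).symm
    (NatIso.ofComponents (fun (A : UnitaryCcMod X 𝕜) => (asIso (A.toSectionsGermSheaf hb) :))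
      fun _ => UnitaryCcMod.hom_ext fun _ => rfl).symm

end

/-- For a Hausdorff space `X` with a basis of compact open sets
and a commutative unital ring `𝕜`, the category of sheaves of `𝕜`-modules on
`X` is equivalent to the category of unitary right `C_c(X,𝕜)`-modules, via the
compactly supported sections functor (with action `(s·f)(x) = f(x)s(x)`) and the
germ functor. -/
theorem sheaves_equivalent_to_Cc_modules (X : Type) [TopologicalSpace X]
    [T2Space X]
    (hbasis : ∀ x : X, ∀ W : Set X, IsOpen W → x ∈ W →
      ∃ K : Set X, x ∈ K ∧ K ⊆ W ∧ IsOpen K ∧ IsCompact K)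
    (𝕜 : Type) [CommRing 𝕜] :
    ∃ e : SheafMod X 𝕜 ≌ UnitaryCcMod X 𝕜,
      ∀ F : SheafMod X 𝕜,
        ∃ h : (e.functor.obj F).M = {s : ∀ x, F.stalk x // s ∈ F.Γc},
          ∀ (m : (e.functor.obj F).M) (f : X → 𝕜), f ∈ Cc X 𝕜 →
            (cast h ((e.functor.obj F).act m f) :
                {s : ∀ x, F.stalk x // s ∈ F.Γc}).1
              = F.actSec (cast h m).1 f :=
  ⟨sheafModEquivUnitaryCcMod hbasis, fun F =>
    ⟨rfl, fun m _ hf =>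
      congrArg Subtype.val (SheafMod.sectionsModule_act (hb := hbasis) (F := F) hf m)⟩⟩
end
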